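/- Let A, B, X, Λ be n×n complex matrices with Λ = diag(λ₁, …, λₙ) diagonal, X and B invertible, and A·X = B·X·Λ. Let c ∈ ℂ and R > 0 satisfy |λᵢ − c| ≠ R for every i. Then (1/(2πi)) ∮_{C(c,R)} (z·B − A)⁻¹·B dz = X·Λ_Γ·X⁻¹, where the integral is over the positively oriented circle C(c,R) of radius R centered at c. -/

import Mathlib

/-!
Since `A = B X Λ X⁻¹`, the pencil factors as `z B - A = B X (z - Λ) X⁻¹`, so on the circle the
integrand is `X (z - Λ)⁻¹ X⁻¹`. Entry by entry the integral is then a combination of the Cauchy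
integrals `∮ (z - λₖ)⁻¹ dz`, which equal `2πi` or `0` according as `λₖ` lies inside or outside
the circle.
-/

open Matrix Metric Complex Set

theorem circleIntegral_sub_inv_eq_ite {c w : ℂ} {R : ℝ} (hR : 0 ≤ R) (hw : ‖w - c‖ ≠ R) :
    (2 * Real.pi * I)⁻¹ * (∮ z in C(c, R), (z - w)⁻¹) =
      if ‖w - c‖ < R then 1 else 0 := by
  rcases hw.lt_or_gt with hin | hout
  · rw [if_pos hin, circleIntegral.integral_sub_inv_of_mem_ball (by rwa [mem_ball, dist_eq]),
      inv_mul_cancel₀ (by simp [Real.pi_ne_zero])]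
  · have hball : closedBall c R ⊆ {w}ᶜ := fun z hz (hzw : z = w) => by
      rw [mem_closedBall, dist_eq, hzw] at hz
      exact hz.not_gt hout
    have hdiff : DifferentiableOn ℂ (fun z => (z - w)⁻¹) {w}ᶜ := fun z hz =>
      ((differentiableAt_id.sub_const w).inv (sub_ne_zero.2 hz)).differentiableWithinAt
    rw [if_neg hout.not_gt, (hdiff.diffContOnCl_ball hball).circleIntegral_eq_zero hR, mul_zero]

theorem Matrix.mul_diagonal_mul_apply {ι R : Type*} [Fintype ι] [DecidableEq ι] [CommSemiring R]
    (X Y : Matrix ι ι R) (v : ι → R) (i j : ι) :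
    (X * diagonal v * Y) i j = ∑ k, X i k * Y k j * v k := by
  rw [mul_apply]
  exact Finset.sum_congr rfl fun k _ => by rw [mul_diagonal]; ring

theorem Matrix.inv_smul_sub_mul_eq_of_mul_eq {ι K : Type*} [Fintype ι] [DecidableEq ι] [Field K]
    {A B X : Matrix ι ι K} {d : ι → K} (hX : IsUnit X) (hB : IsUnit B)
    (h : A * X = B * X * diagonal d) {z : K} (hz : ∀ k, z ≠ d k) :
    (z • B - A)⁻¹ * B = X * diagonal (fun k => (z - d k)⁻¹) * X⁻¹ := by
  have hXd := (isUnit_iff_isUnit_det X).mp hX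
  have hBd := (isUnit_iff_isUnit_det B).mp hB
  have hA : A = B * X * diagonal d * X⁻¹ := by
    rw [← h, Matrix.mul_assoc, mul_nonsing_inv X hXd, Matrix.mul_one]
  have hpencil : z • B - A = B * (X * diagonal (fun k => z - d k) * X⁻¹) := by
    have hdiag : diagonal (fun k => z - d k) = z • 1 - diagonal d := by
      rw [smul_one_eq_diagonal, diagonal_sub]
    simp only [hA, hdiag, Matrix.mul_sub, Matrix.sub_mul, Matrix.mul_smul, smul_mul_assoc,
      Matrix.mul_one, Matrix.mul_assoc, mul_nonsing_inv X hXd]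
  have hdiag_inv : (diagonal fun k => z - d k)⁻¹ = diagonal fun k => (z - d k)⁻¹ := by
    refine inv_eq_left_inv ?_
    rw [diagonal_mul_diagonal, ← diagonal_one]
    exact congrArg diagonal (funext fun k => inv_mul_cancel₀ (sub_ne_zero.2 (hz k)))
  rw [hpencil, mul_inv_rev, Matrix.mul_assoc, nonsing_inv_mul B hBd, Matrix.mul_one, mul_inv_rev,
    mul_inv_rev, nonsing_inv_nonsing_inv X hXd, hdiag_inv, Matrix.mul_assoc]

theorem stmt_3 {n : ℕ} (A B X Λ : Matrix (Fin n) (Fin n) ℂ)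
    (d : Fin n → ℂ) (hΛ : Λ = Matrix.diagonal d)
    (hX : IsUnit X) (hB : IsUnit B)
    (h : A * X = B * X * Λ)
    (c : ℂ) (R : ℝ) (hR : 0 < R)
    (hsep : ∀ i, ‖d i - c‖ ≠ R) :
    ∀ i j : Fin n,
      (2 * Real.pi * Complex.I)⁻¹ *
          (∮ z in C(c, R), (((z • B - A)⁻¹ * B) i j))
        = (X * Matrix.diagonal
              (fun i => if ‖d i - c‖ < R then (1 : ℂ) else 0)
            * X⁻¹) i j := by
  subst hΛ
  intro i j
  have hoff : ∀ z ∈ sphere c R, ∀ k, z ≠ d k := fun z hz k hzk => by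
    rw [mem_sphere, dist_eq, hzk] at hz
    exact hsep k hz
  have hentry : EqOn (fun z => ((z • B - A)⁻¹ * B) i j)
      (fun z => ∑ k, X i k * X⁻¹ k j * (z - d k)⁻¹) (sphere c R) := fun z hz => by
    simp only [inv_smul_sub_mul_eq_of_mul_eq hX hB h (hoff z hz), mul_diagonal_mul_apply]
  have hint : ∀ k, CircleIntegrable (fun z => X i k * X⁻¹ k j * (z - d k)⁻¹) c R := fun k =>
    (circleIntegrable_sub_inv_iff.2 <| Or.inr fun hk =>
      hoff _ (by rwa [abs_of_pos hR] at hk) k rfl).const_mul _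
  rw [circleIntegral.integral_congr hR.le hentry, circleIntegral.integral_fun_sum fun k _ => hint k,
    Finset.mul_sum, mul_diagonal_mul_apply]
  refine Finset.sum_congr rfl fun k _ => ?_
  rw [circleIntegral.integral_const_mul, mul_left_comm,
    circleIntegral_sub_inv_eq_ite hR.le (hsep k)]
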